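/- Let M = {f_1,...,f_{4m+2}} ⊂ R^{2m+1} be as above, with S ⊆ M ∖ {f_{4m+2}} span-closed, and write S = S_0 ∪ S_1 ∪ ⋯ ∪ S_k with S_0 independent of cardinality L and each S_i (i ≥ 1) an interval, as in the structure decomposition. If 0 < δ ≤ 1/6 and θ ∈ P_δ, then rank(S) ≥ Σ_{f_i ∈ S} θ_i + k(1/2 − 3δ) + L(1/2 − δ); in particular Σ_{f_i ∈ S} θ_i ≤ rank(S). -/
import Mathlib


open Finset

noncomputable def nbM (m : ℕ) (i : Fin (4*m+2)) : Fin (2*m+1) → ℝ :=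
  if i.val = 4*m+1 then fun t => (-1 : ℝ) ^ (t : ℕ)
  else if i.val % 2 = 0 then
    fun t => if t.val = i.val / 2 then 1 else 0
  else
    fun t => if t.val = i.val / 2 then 1 else if t.val = i.val / 2 + 1 then -1 else 0

lemma iccSum3 (a : ℕ) (f : ℕ → ℝ) :
    ∑ r ∈ Finset.Icc a (a+3), f r = f a + f (a+1) + f (a+2) + f (a+3) := by
  rw [show a+3 = (a+2)+1 from rfl, Finset.sum_Icc_succ_top (by omega),
      show a+2 = (a+1)+1 from rfl, Finset.sum_Icc_succ_top (by omega),
      Finset.sum_Icc_succ_top (by omega), Finset.Icc_self, Finset.sum_singleton]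

lemma iccSum2 (a : ℕ) (f : ℕ → ℝ) :
    ∑ r ∈ Finset.Icc a (a+2), f r = f a + f (a+1) + f (a+2) := by
  rw [show a+2 = (a+1)+1 from rfl, Finset.sum_Icc_succ_top (by omega),
      Finset.sum_Icc_succ_top (by omega), Finset.Icc_self, Finset.sum_singleton]

lemma iccSum1 (a : ℕ) (f : ℕ → ℝ) :
    ∑ r ∈ Finset.Icc a (a+1), f r = f a + f (a+1) := by
  rw [Finset.sum_Icc_succ_top (by omega), Finset.Icc_self, Finset.sum_singleton]

/-- Sum bound for an interval starting at an even position. -/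
lemma evenStart (m : ℕ) (δ : ℝ) (θ' : ℕ → ℝ)
    (hub : ∀ r, θ' r ≤ 1/2 + δ) (hlb : ∀ r, r ≤ 4*m+1 → 1/2 - δ ≤ θ' r)
    (hblk : ∀ j, j < m → θ' (4*j) + θ' (4*j+1) + θ' (4*j+2) + θ' (4*j+3) = 2) :
    ∀ n s, s % 2 = 0 → s + n ≤ 2*m →
      ∑ r ∈ Finset.Icc (2*s) (2*(s+n)), θ' r ≤ n + 1/2 + δ := by
  intro n
  induction n using Nat.strong_induction_on with
  | _ n ih =>
    intro s hs hsn
    match n with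
    | 0 =>
      simp only [Nat.add_zero, Finset.Icc_self, Finset.sum_singleton, Nat.cast_zero]
      linarith [hub (2*s)]
    | 1 =>
      obtain ⟨j, rfl⟩ : ∃ j, s = 2*j := ⟨s/2, by omega⟩
      have hj : j < m := by omega
      have hb := hblk j hj
      have h2 : ∑ r ∈ Finset.Icc (2*(2*j)) (2*(2*j+1)), θ' r
          = θ' (4*j) + θ' (4*j+1) + θ' (4*j+2) := by
        have := iccSum2 (4*j) θ'
        rw [show 2*(2*j) = 4*j from by ring, show 2*(2*j+1) = 4*j+2 from by ring, this]
      rw [h2]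
      have := hlb (4*j+3) (by omega)
      push_cast
      linarith
    | (n+2) =>
      obtain ⟨j, rfl⟩ : ∃ j, s = 2*j := ⟨s/2, by omega⟩
      have hj : j < m := by omega
      have hsplit : Finset.Icc (2*(2*j)) (2*(2*j+(n+2)))
          = Finset.Icc (4*j) (4*j+3) ∪ Finset.Icc (2*(2*j+2)) (2*((2*j+2)+n)) := by
        ext x; simp only [Finset.mem_Icc, Finset.mem_union]; omega
      have hd : Disjoint (Finset.Icc (4*j) (4*j+3)) (Finset.Icc (2*(2*j+2)) (2*((2*j+2)+n))) := by
        rw [Finset.disjoint_left]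
        intro x hx hx'
        simp only [Finset.mem_Icc] at hx hx'
        omega
      rw [hsplit, Finset.sum_union hd, iccSum3, hblk j hj]
      have hrest := ih n (by omega) (2*j+2) (by omega) (by omega)
      push_cast
      linarith

/-- Sum bound for a general interval. -/
lemma intervalSum (m : ℕ) (δ : ℝ) (hδ0 : 0 < δ) (θ' : ℕ → ℝ)
    (hub : ∀ r, θ' r ≤ 1/2 + δ) (hlb : ∀ r, r ≤ 4*m+1 → 1/2 - δ ≤ θ' r)
    (hblk : ∀ j, j < m → θ' (4*j) + θ' (4*j+1) + θ' (4*j+2) + θ' (4*j+3) = 2)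
    (s t : ℕ) (hst : s ≤ t) (ht : t ≤ 2*m) :
    ∑ r ∈ Finset.Icc (2*s) (2*t), θ' r ≤ ((t - s : ℕ) : ℝ) + 1/2 + 3*δ := by
  rcases Nat.even_or_odd s with hev | hodd
  · have hs2 : s % 2 = 0 := Nat.even_iff.mp hev
    have := evenStart m δ θ' hub hlb hblk (t - s) s hs2 (by omega)
    rw [show s + (t - s) = t from by omega] at this
    linarith
  · have hs2 : s % 2 = 1 := Nat.odd_iff.mp hodd
    rcases Nat.eq_or_lt_of_le hst with rfl | hlt
    · rw [show s - s = 0 from by omega, Finset.Icc_self, Finset.sum_singleton]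
      have := hub (2*s)
      push_cast
      linarith
    · -- s odd, s < t
      obtain ⟨j, rfl⟩ : ∃ j, s = 2*j+1 := ⟨s/2, by omega⟩
      have hj : j < m := by omega
      have hb := hblk j hj
      have hlb1 := hlb (4*j) (by omega)
      have hlb2 := hlb (4*j+1) (by omega)
      have hsplit : Finset.Icc (2*(2*j+1)) (2*t)
          = Finset.Icc (4*j+2) (4*j+3) ∪ Finset.Icc (2*(2*j+2)) (2*((2*j+2)+(t-(2*j+2)))) := by
        ext x; simp only [Finset.mem_Icc, Finset.mem_union]; omega
      have hd : Disjoint (Finset.Icc (4*j+2) (4*j+3))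
          (Finset.Icc (2*(2*j+2)) (2*((2*j+2)+(t-(2*j+2))))) := by
        rw [Finset.disjoint_left]
        intro x hx hx'
        simp only [Finset.mem_Icc] at hx hx'
        omega
      have h2 : ∑ r ∈ Finset.Icc (4*j+2) (4*j+3), θ' r = θ' (4*j+2) + θ' (4*j+3) := by
        have := iccSum1 (4*j+2) θ'
        rw [show 4*j+2+1 = 4*j+3 from rfl] at this
        exact this
      have hrest := evenStart m δ θ' hub hlb hblk (t - (2*j+2)) (2*j+2) (by omega) (by omega)
      rw [hsplit, Finset.sum_union hd, h2]
      have hc : ((t - (2*j+1) : ℕ) : ℝ) = ((t - (2*j+2) : ℕ) : ℝ) + 1 := by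
        have : t - (2*j+1) = (t - (2*j+2)) + 1 := by omega
        rw [this]; push_cast; ring
      rw [hc]
      linarith

/-- rank lower bound for an interval -/
lemma rankInterval (m s t : ℕ) (hst : s ≤ t) (ht : t ≤ 2*m) :
    (t - s) + 1 ≤ Module.finrank ℝ (Submodule.span ℝ
      (nbM m '' ((univ.filter fun j : Fin (4*m+2) => 2*s ≤ j.val ∧ j.val ≤ 2*t) :
        Set (Fin (4*m+2))))) := by
  set E : Set (Fin (2*m+1) → ℝ) :=
    nbM m '' ((univ.filter fun j : Fin (4*m+2) => 2*s ≤ j.val ∧ j.val ≤ 2*t) :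
      Set (Fin (4*m+2))) with hE
  set g : Fin (t - s + 1) → Fin (2*m+1) := fun r => ⟨s + r.val, by omega⟩ with hg
  have ginj : Function.Injective g := by
    intro a b hab
    have : s + a.val = s + b.val := congrArg Fin.val hab
    exact Fin.ext (by omega)
  set f : Fin (t - s + 1) → (Fin (2*m+1) → ℝ) := fun r => (Pi.basisFun ℝ (Fin (2*m+1))) (g r)
    with hf
  have hli : LinearIndependent ℝ f := (Pi.basisFun ℝ (Fin (2*m+1))).linearIndependent.comp g ginj
  have hmem : ∀ r, f r ∈ E := by
    intro r
    have hidx : 2*(s + r.val) < 4*m+2 := by omega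
    refine ⟨(⟨2*(s + r.val), hidx⟩ : Fin (4*m+2)), ?_, ?_⟩
    · simp only [Finset.coe_filter, Set.mem_setOf_eq, Finset.mem_univ, true_and]
      omega
    · funext x
      have h1 : ¬ (2*(s + r.val) = 4*m+1) := by omega
      have h2 : (2*(s + r.val)) % 2 = 0 := by omega
      simp only [nbM, h1, if_false, h2, if_true]
      rw [hf]
      simp only [Pi.basisFun_apply, Pi.single_apply]
      have : (2*(s + r.val)) / 2 = s + r.val := by omega
      rw [this]
      by_cases hx : x = g r
      · subst hx; simp [hg]
      · have : ¬ (x.val = s + r.val) := by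
          intro h; exact hx (Fin.ext (by simp [hg, h]))
        simp [hx, this]
  have hspan : Submodule.span ℝ (Set.range f) ≤ Submodule.span ℝ E :=
    Submodule.span_mono (Set.range_subset_iff.mpr hmem)
  have hcard : Module.finrank ℝ (Submodule.span ℝ (Set.range f)) = t - s + 1 := by
    rw [finrank_span_eq_card hli, Fintype.card_fin]
  calc t - s + 1 = Module.finrank ℝ (Submodule.span ℝ (Set.range f)) := hcard.symm
    _ ≤ _ := Submodule.finrank_mono hspan

/-- for a span-closed `S ⊆ M ∖ {f_{4m+2}}` with structure decomposition
`S = S_0 ∪ S_1 ∪ ⋯ ∪ S_k` (`S_0` independent of cardinality `L`, each `S_i` an interval),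
`0 < δ ≤ 1/6` and `θ ∈ P_δ` give
`rank S ≥ Σ_{f_i ∈ S} θ_i + k(1/2 − 3δ) + L(1/2 − δ)`, hence `Σ_{f_i ∈ S} θ_i ≤ rank S`. -/
theorem stmt13 (m : ℕ) (δ : ℝ) (hδ0 : 0 < δ) (hδ : δ ≤ 1/6)
    (θ : Fin (4*m+2) → ℝ)
    (hnear : ∀ i, |θ i - 1/2| ≤ δ)
    (hblock : ∀ (j : ℕ) (hj : j < m), θ ⟨4*j, by omega⟩ + θ ⟨4*j+1, by omega⟩
        + θ ⟨4*j+2, by omega⟩ + θ ⟨4*j+3, by omega⟩ = 2)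
    (hlastsum : θ ⟨4*m, by omega⟩ + θ ⟨4*m+1, by omega⟩ = 1)
    (A : Finset (Fin (4*m+2)))
    (hlast : ∀ i ∈ A, i.val ≠ 4*m+1)
    (hclosed : ∀ i : Fin (4*m+2), i.val ≠ 4*m+1 →
      nbM m i ∈ Submodule.span ℝ (nbM m '' (A : Set (Fin (4*m+2)))) → i ∈ A)
    (k L : ℕ) (S0 : Finset (Fin (4*m+2))) (T : Fin k → Finset (Fin (4*m+2)))
    (hL : S0.card = L)
    (hdecomp : A = S0 ∪ univ.biUnion T)
    (hdisj0 : ∀ i, Disjoint S0 (T i))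
    (hdisj : Pairwise fun i j => Disjoint (T i) (T j))
    (hindep : LinearIndependent ℝ (fun x : {x // x ∈ S0} => nbM m x))
    (hint : ∀ i, ∃ s t : ℕ, s ≤ t ∧ t ≤ 2*m ∧
      T i = univ.filter fun j : Fin (4*m+2) => 2*s ≤ j.val ∧ j.val ≤ 2*t)
    (hrank : Module.finrank ℝ (Submodule.span ℝ (nbM m '' (A : Set (Fin (4*m+2))))) =
      Module.finrank ℝ (Submodule.span ℝ (nbM m '' (S0 : Set (Fin (4*m+2))))) +
        ∑ i, Module.finrank ℝ (Submodule.span ℝ (nbM m '' (T i : Set (Fin (4*m+2)))))) :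
    (∑ i ∈ A, θ i) + k*(1/2 - 3*δ) + L*(1/2 - δ) ≤
      (Module.finrank ℝ (Submodule.span ℝ (nbM m '' (A : Set (Fin (4*m+2))))) : ℝ) ∧
    ∑ i ∈ A, θ i ≤
      (Module.finrank ℝ (Submodule.span ℝ (nbM m '' (A : Set (Fin (4*m+2))))) : ℝ) := by
  -- basic bounds on θ
  have hub' : ∀ i, θ i ≤ 1/2 + δ := fun i => by have := abs_le.mp (hnear i); linarith [this.2]
  have hlb' : ∀ i, 1/2 - δ ≤ θ i := fun i => by have := abs_le.mp (hnear i); linarith [this.1]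
  -- extended θ on ℕ
  set θ' : ℕ → ℝ := fun r => if h : r < 4*m+2 then θ ⟨r, h⟩ else 0 with hθ'
  have hub : ∀ r, θ' r ≤ 1/2 + δ := by
    intro r
    by_cases h : r < 4*m+2
    · simp only [hθ', dif_pos h]; exact hub' _
    · simp only [hθ', dif_neg h]; linarith
  have hlb : ∀ r, r ≤ 4*m+1 → 1/2 - δ ≤ θ' r := by
    intro r hr
    have h : r < 4*m+2 := by omega
    simp only [hθ', dif_pos h]
    exact hlb' _
  have hblk : ∀ j, j < m → θ' (4*j) + θ' (4*j+1) + θ' (4*j+2) + θ' (4*j+3) = 2 := by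
    intro j hj
    have h0 : 4*j < 4*m+2 := by omega
    have h1 : 4*j+1 < 4*m+2 := by omega
    have h2 : 4*j+2 < 4*m+2 := by omega
    have h3 : 4*j+3 < 4*m+2 := by omega
    simp only [hθ', dif_pos h0, dif_pos h1, dif_pos h2, dif_pos h3]
    exact hblock j hj
  -- per-interval facts
  have keyθ : ∀ i, ∑ j ∈ T i, θ j ≤
      (Module.finrank ℝ (Submodule.span ℝ (nbM m '' (T i : Set (Fin (4*m+2))))) : ℝ)
        - 1/2 + 3*δ := by
    intro i
    obtain ⟨s, t, hst, ht, hTi⟩ := hint i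
    have hsum : ∑ j ∈ T i, θ j = ∑ r ∈ Finset.Icc (2*s) (2*t), θ' r := by
      rw [hTi]
      refine Finset.sum_bij' (fun j _ => j.val)
        (fun r hr => (⟨r, by simp only [Finset.mem_Icc] at hr; omega⟩ : Fin (4*m+2)))
        ?_ ?_ ?_ ?_ ?_
      · intro a ha
        simp only [Finset.mem_filter, Finset.mem_univ, true_and] at ha
        simp only [Finset.mem_Icc]
        omega
      · intro a ha
        simp only [Finset.mem_Icc] at ha
        simp only [Finset.mem_filter, Finset.mem_univ, true_and]
        omega
      · intro a ha
        exact Fin.ext rfl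
      · intro a ha
        rfl
      · intro a ha
        simp only [hθ', dif_pos a.isLt]
    have hrk := rankInterval m s t hst ht
    rw [← hTi] at hrk
    have hs := intervalSum m δ hδ0 θ' hub hlb hblk s t hst ht
    rw [hsum]
    have hcast : ((t - s : ℕ) : ℝ) + 1 ≤
        (Module.finrank ℝ (Submodule.span ℝ (nbM m '' (T i : Set (Fin (4*m+2))))) : ℝ) := by
      exact_mod_cast hrk
    linarith
  -- rank of S0
  have hS0rank : Module.finrank ℝ (Submodule.span ℝ (nbM m '' (S0 : Set (Fin (4*m+2))))) = L := by
    have himg : nbM m '' (S0 : Set (Fin (4*m+2)))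
        = Set.range (fun x : {x // x ∈ S0} => nbM m x) := by
      rw [Set.image_eq_range]; rfl
    rw [himg, finrank_span_eq_card hindep, Fintype.card_coe, hL]
  -- sum over S0
  have hS0sum : ∑ j ∈ S0, θ j ≤ L * (1/2 + δ) := by
    have := Finset.sum_le_card_nsmul S0 θ (1/2 + δ) (fun i _ => hub' i)
    rwa [hL, nsmul_eq_mul] at this
  -- decompose the total sum
  have hdisjU : Disjoint S0 (univ.biUnion T) := by
    rw [Finset.disjoint_biUnion_right]
    intro i _
    exact hdisj0 i
  have hpd : (↑(univ : Finset (Fin k)) : Set (Fin k)).PairwiseDisjoint T :=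
    fun i _ j _ hij => hdisj hij
  have hsumA : ∑ i ∈ A, θ i = ∑ j ∈ S0, θ j + ∑ i : Fin k, ∑ j ∈ T i, θ j := by
    rw [hdecomp, Finset.sum_union hdisjU, Finset.sum_biUnion hpd]
  -- abbreviations
  have hRAeq : ((Module.finrank ℝ (Submodule.span ℝ (nbM m '' (A : Set (Fin (4*m+2)))))) : ℝ)
      = L + ∑ i : Fin k,
        ((Module.finrank ℝ (Submodule.span ℝ (nbM m '' (T i : Set (Fin (4*m+2)))))) : ℝ) := by
    rw [hrank, hS0rank]
    push_cast
    ring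
  have hTsum : ∑ i : Fin k, ∑ j ∈ T i, θ j ≤ ∑ i : Fin k,
      ((Module.finrank ℝ (Submodule.span ℝ (nbM m '' (T i : Set (Fin (4*m+2)))))) : ℝ)
        + k * (3*δ - 1/2) := by
    calc ∑ i : Fin k, ∑ j ∈ T i, θ j ≤ ∑ i : Fin k,
        (((Module.finrank ℝ (Submodule.span ℝ (nbM m '' (T i : Set (Fin (4*m+2)))))) : ℝ)
          + (3*δ - 1/2)) := by
          apply Finset.sum_le_sum
          intro i _
          have := keyθ i
          linarith
      _ = _ := by
          rw [Finset.sum_add_distrib, Finset.sum_const, Finset.card_univ, Fintype.card_fin,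
            nsmul_eq_mul]
  have h1 : (∑ i ∈ A, θ i) + k*(1/2 - 3*δ) + L*(1/2 - δ) ≤
      ((Module.finrank ℝ (Submodule.span ℝ (nbM m '' (A : Set (Fin (4*m+2)))))) : ℝ) := by
    rw [hsumA, hRAeq]
    linarith
  have hk0 : (0:ℝ) ≤ (k:ℝ) * (1/2 - 3*δ) :=
    mul_nonneg (Nat.cast_nonneg k) (by linarith)
  have hL0 : (0:ℝ) ≤ (L:ℝ) * (1/2 - δ) :=
    mul_nonneg (Nat.cast_nonneg L) (by linarith)
  exact ⟨h1, by linarith⟩
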